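/- arXiv:1108.3306 — 2 statements merged into one kernel-verified Lean document; each statement's English description precedes it below -/
import Mathlib

section
/- Let $(L_1, L_2)$ be a matched pair of Lie algebroids over $M$, with mutual flat connections $\nabla$. Define on $L = L_1 \oplus L_2$ the anchor $a(u_1 + u_2) = a_1(u_1) + a_2(u_2)$ and the bracket $\{u_1+u_2, v_1+v_2\} = (\{u_1,v_1\}_1 + \nabla_{v_1}u_2 - \nabla_{v_2}u_1) + (\{u_2,v_2\}_2 + \nabla_{u_1}v_2 - \nabla_{u_2}v_1)$ (with appropriate sign conventions for cross terms). Then $(L, a, \{\cdot,\cdot\})$ is a Lie algebroid, and $L_1, L_2$ are sub-Lie algebroids of $L$. -/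
structure LieAlgebroid (k R L : Type*) [CommRing k] [CommRing R] [Algebra k R]
    [LieRing L] [LieAlgebra k L] [Module R L] [IsScalarTower k R L] where
  anchor : L →ₗ[R] Derivation k R R
  anchor_bracket : ∀ u v : L, anchor ⁅u, v⁆ = ⁅anchor u, anchor v⁆
  leibniz : ∀ (u v : L) (f : R), ⁅u, f • v⁆ = f • ⁅u, v⁆ + anchor u f • v

structure LieAlgebroid.Connection {k R L : Type*} [CommRing k] [CommRing R] [Algebra k R]
    [LieRing L] [LieAlgebra k L] [Module R L] [IsScalarTower k R L]
    (A : LieAlgebroid k R L) (E : Type*) [AddCommGroup E] [Module R E] where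
  nabla : L → E → E
  add_left : ∀ u v e, nabla (u + v) e = nabla u e + nabla v e
  smul_left : ∀ (f : R) (u : L) e, nabla (f • u) e = f • nabla u e
  add_right : ∀ u e e', nabla u (e + e') = nabla u e + nabla u e'
  leibniz : ∀ (u : L) (f : R) e, nabla u (f • e) = f • nabla u e + A.anchor u f • e

def LieAlgebroid.Connection.curv {k R L : Type*} [CommRing k] [CommRing R] [Algebra k R]
    [LieRing L] [LieAlgebra k L] [Module R L] [IsScalarTower k R L]
    {A : LieAlgebroid k R L} {E : Type*} [AddCommGroup E] [Module R E]
    (C : A.Connection E) (u v : L) (e : E) : E :=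
  C.nabla u (C.nabla v e) - C.nabla v (C.nabla u e) - C.nabla ⁅u, v⁆ e

/-!
Everything is checked componentwise. Additivity, the Leibniz rule and the sub-algebroid
properties are direct expansions, and the anchor identity is matched-pair equation (i).
In the Jacobi identity the `L₁`-component involves only the flatness of the `L₂`-connection
on `L₁` and equation (iii); exchanging the roles of `L₁` and `L₂` turns the `L₂`-component
into the `L₁`-component of the swapped pair, where it is the same computation with (ii).
-/

namespace LieAlgebroid.Connection

variable {k R L : Type*} [CommRing k] [CommRing R] [Algebra k R]
    [LieRing L] [LieAlgebra k L] [Module R L] [IsScalarTower k R L]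
    {A : LieAlgebroid k R L} {E : Type*} [AddCommGroup E] [Module R E]
    (C : A.Connection E)

def toAddMonoidHom₂ : L →+ E →+ E :=
  AddMonoidHom.mk' (fun u => AddMonoidHom.mk' (C.nabla u) (C.add_right u))
    fun u v => AddMonoidHom.ext (C.add_left u v)

lemma zero_left (e : E) : C.nabla 0 e = 0 :=
  DFunLike.congr_fun C.toAddMonoidHom₂.map_zero e

lemma zero_right (u : L) : C.nabla u 0 = 0 :=
  (C.toAddMonoidHom₂ u).map_zero

lemma sub_left (u v : L) (e : E) : C.nabla (u - v) e = C.nabla u e - C.nabla v e :=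
  DFunLike.congr_fun (C.toAddMonoidHom₂.map_sub u v) e

lemma sub_right (u : L) (e e' : E) : C.nabla u (e - e') = C.nabla u e - C.nabla u e' :=
  (C.toAddMonoidHom₂ u).map_sub e e'

lemma curv_eq_zero_iff (u v : L) (e : E) :
    C.curv u v e = 0 ↔ C.nabla u (C.nabla v e) = C.nabla v (C.nabla u e) + C.nabla ⁅u, v⁆ e := by
  rw [curv, sub_sub, sub_eq_zero]

end LieAlgebroid.Connection

section TwilledSum

variable {k R L₁ L₂ : Type*} [CommRing k] [CommRing R] [Algebra k R]
    [LieRing L₁] [LieAlgebra k L₁] [Module R L₁] [IsScalarTower k R L₁]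
    [LieRing L₂] [LieAlgebra k L₂] [Module R L₂] [IsScalarTower k R L₂]
    {A₁ : LieAlgebroid k R L₁} {A₂ : LieAlgebroid k R L₂}
    (C₁₂ : A₁.Connection L₂) (C₂₁ : A₂.Connection L₁)

def twilledBracket (p q : L₁ × L₂) : L₁ × L₂ :=
  (⁅p.1, q.1⁆ + C₂₁.nabla p.2 q.1 - C₂₁.nabla q.2 p.1,
    ⁅p.2, q.2⁆ + C₁₂.nabla p.1 q.2 - C₁₂.nabla q.1 p.2)

def twilledAnchor (A₁ : LieAlgebroid k R L₁) (A₂ : LieAlgebroid k R L₂) (p : L₁ × L₂) :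
    Derivation k R R :=
  A₁.anchor p.1 + A₂.anchor p.2

lemma twilledBracket_self (p : L₁ × L₂) : twilledBracket C₁₂ C₂₁ p p = 0 := by
  simp [twilledBracket]

lemma twilledBracket_add_left (p q r : L₁ × L₂) :
    twilledBracket C₁₂ C₂₁ (p + q) r = twilledBracket C₁₂ C₂₁ p r + twilledBracket C₁₂ C₂₁ q r := by
  simp only [twilledBracket, Prod.fst_add, Prod.snd_add, add_lie, C₂₁.add_left, C₂₁.add_right,
    C₁₂.add_left, C₁₂.add_right, Prod.mk_add_mk, Prod.mk.injEq]
  constructor <;> abel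

lemma twilledBracket_add_right (p q r : L₁ × L₂) :
    twilledBracket C₁₂ C₂₁ p (q + r) = twilledBracket C₁₂ C₂₁ p q + twilledBracket C₁₂ C₂₁ p r := by
  simp only [twilledBracket, Prod.fst_add, Prod.snd_add, lie_add, C₂₁.add_left, C₂₁.add_right,
    C₁₂.add_left, C₁₂.add_right, Prod.mk_add_mk, Prod.mk.injEq]
  constructor <;> abel

lemma fst_twilledBracket_leibniz_lie (hflat : ∀ u v e, C₂₁.curv u v e = 0)
    (hmp : ∀ (u₂ : L₂) (u₁ v₁ : L₁),
      C₂₁.nabla u₂ ⁅u₁, v₁⁆ =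
        ⁅C₂₁.nabla u₂ u₁, v₁⁆ + ⁅u₁, C₂₁.nabla u₂ v₁⁆ +
          C₂₁.nabla (C₁₂.nabla v₁ u₂) u₁ - C₂₁.nabla (C₁₂.nabla u₁ u₂) v₁)
    (p q r : L₁ × L₂) :
    (twilledBracket C₁₂ C₂₁ p (twilledBracket C₁₂ C₂₁ q r)).1 =
      (twilledBracket C₁₂ C₂₁ (twilledBracket C₁₂ C₂₁ p q) r).1 +
        (twilledBracket C₁₂ C₂₁ q (twilledBracket C₁₂ C₂₁ p r)).1 := by
  obtain ⟨p₁, p₂⟩ := p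
  obtain ⟨q₁, q₂⟩ := q
  obtain ⟨r₁, r₂⟩ := r
  have flat u v e := (C₂₁.curv_eq_zero_iff u v e).mp (hflat u v e)
  simp only [twilledBracket, C₂₁.add_left, C₂₁.sub_left, C₂₁.add_right, C₂₁.sub_right,
    lie_add, lie_sub, add_lie, sub_lie]
  rw [leibniz_lie p₁ q₁ r₁, hmp p₂ q₁ r₁, hmp q₂ p₁ r₁, hmp r₂ p₁ q₁,
    flat p₂ q₂ r₁, flat p₂ r₂ q₁, flat q₂ r₂ p₁, ← lie_skew (C₂₁.nabla r₂ p₁) q₁]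
  abel

lemma twilledBracket_leibniz_lie
    (hflat₁₂ : ∀ u v e, C₁₂.curv u v e = 0) (hflat₂₁ : ∀ u v e, C₂₁.curv u v e = 0)
    (hmp₂ : ∀ (u₁ : L₁) (u₂ v₂ : L₂),
      C₁₂.nabla u₁ ⁅u₂, v₂⁆ =
        ⁅C₁₂.nabla u₁ u₂, v₂⁆ + ⁅u₂, C₁₂.nabla u₁ v₂⁆ +
          C₁₂.nabla (C₂₁.nabla v₂ u₁) u₂ - C₁₂.nabla (C₂₁.nabla u₂ u₁) v₂)
    (hmp₃ : ∀ (u₂ : L₂) (u₁ v₁ : L₁),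
      C₂₁.nabla u₂ ⁅u₁, v₁⁆ =
        ⁅C₂₁.nabla u₂ u₁, v₁⁆ + ⁅u₁, C₂₁.nabla u₂ v₁⁆ +
          C₂₁.nabla (C₁₂.nabla v₁ u₂) u₁ - C₂₁.nabla (C₁₂.nabla u₁ u₂) v₁)
    (p q r : L₁ × L₂) :
    twilledBracket C₁₂ C₂₁ p (twilledBracket C₁₂ C₂₁ q r) =
      twilledBracket C₁₂ C₂₁ (twilledBracket C₁₂ C₂₁ p q) r +
        twilledBracket C₁₂ C₂₁ q (twilledBracket C₁₂ C₂₁ p r) :=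
  Prod.ext (fst_twilledBracket_leibniz_lie C₁₂ C₂₁ hflat₂₁ hmp₃ p q r)
    (fst_twilledBracket_leibniz_lie C₂₁ C₁₂ hflat₁₂ hmp₂ p.swap q.swap r.swap)

lemma twilledAnchor_twilledBracket
    (hmp₁ : ∀ (u₁ : L₁) (u₂ : L₂),
      ⁅A₁.anchor u₁, A₂.anchor u₂⁆ =
        -A₁.anchor (C₂₁.nabla u₂ u₁) + A₂.anchor (C₁₂.nabla u₁ u₂))
    (p q : L₁ × L₂) :
    twilledAnchor A₁ A₂ (twilledBracket C₁₂ C₂₁ p q) =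
      ⁅twilledAnchor A₁ A₂ p, twilledAnchor A₁ A₂ q⁆ := by
  obtain ⟨p₁, p₂⟩ := p
  obtain ⟨q₁, q₂⟩ := q
  simp only [twilledAnchor, twilledBracket, map_add, map_sub, add_lie, lie_add]
  rw [← lie_skew (A₂.anchor p₂), hmp₁ p₁ q₂, hmp₁ q₁ p₂, A₁.anchor_bracket, A₂.anchor_bracket]
  abel

lemma twilledBracket_smul_right (p q : L₁ × L₂) (f : R) :
    twilledBracket C₁₂ C₂₁ p (f • q) =
      f • twilledBracket C₁₂ C₂₁ p q + twilledAnchor A₁ A₂ p f • q := by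
  obtain ⟨p₁, p₂⟩ := p
  obtain ⟨q₁, q₂⟩ := q
  simp only [twilledBracket, twilledAnchor, Prod.smul_mk, A₁.leibniz, A₂.leibniz, C₂₁.leibniz,
    C₁₂.leibniz, C₂₁.smul_left, C₁₂.smul_left, Derivation.add_apply, Prod.mk_add_mk,
    Prod.mk.injEq, smul_add, smul_sub, add_smul]
  constructor <;> abel

lemma twilledBracket_inl_inl (u₁ v₁ : L₁) :
    twilledBracket C₁₂ C₂₁ (u₁, 0) (v₁, 0) = (⁅u₁, v₁⁆, 0) := by
  simp [twilledBracket, C₂₁.zero_left, C₁₂.zero_right]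

lemma twilledBracket_inr_inr (u₂ v₂ : L₂) :
    twilledBracket C₁₂ C₂₁ (0, u₂) (0, v₂) = (0, ⁅u₂, v₂⁆) := by
  simp [twilledBracket, C₁₂.zero_left, C₂₁.zero_right]

lemma twilledAnchor_inl (u₁ : L₁) : twilledAnchor A₁ A₂ (u₁, 0) = A₁.anchor u₁ := by
  simp [twilledAnchor]

lemma twilledAnchor_inr (u₂ : L₂) : twilledAnchor A₁ A₂ (0, u₂) = A₂.anchor u₂ := by
  simp [twilledAnchor]

end TwilledSum

/-- Given a matched pair of Lie algebroids `(L₁, L₂)` (mutual flat connections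
satisfying the matched pair equations), the direct sum `L = L₁ ⊕ L₂` with anchor
`a(u₁+u₂) = a₁(u₁) + a₂(u₂)` and bracket
`{u₁+u₂, v₁+v₂} = ({u₁,v₁}₁ + ∇_{u₂}v₁ - ∇_{v₂}u₁) + ({u₂,v₂}₂ + ∇_{u₁}v₂ - ∇_{v₁}u₂)`
is a Lie algebroid, and `L₁`, `L₂` are sub-Lie algebroids of it. -/
theorem matchedPair_twilledSum {k R L₁ L₂ : Type*} [CommRing k] [CommRing R] [Algebra k R]
    [LieRing L₁] [LieAlgebra k L₁] [Module R L₁] [IsScalarTower k R L₁]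
    [LieRing L₂] [LieAlgebra k L₂] [Module R L₂] [IsScalarTower k R L₂]
    (A₁ : LieAlgebroid k R L₁) (A₂ : LieAlgebroid k R L₂)
    (C₁₂ : A₁.Connection L₂) (C₂₁ : A₂.Connection L₁)
    (hflat₁₂ : ∀ u v e, C₁₂.curv u v e = 0) (hflat₂₁ : ∀ u v e, C₂₁.curv u v e = 0)
    (hmp₁ : ∀ (u₁ : L₁) (u₂ : L₂),
      ⁅A₁.anchor u₁, A₂.anchor u₂⁆ =
        -A₁.anchor (C₂₁.nabla u₂ u₁) + A₂.anchor (C₁₂.nabla u₁ u₂))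
    (hmp₂ : ∀ (u₁ : L₁) (u₂ v₂ : L₂),
      C₁₂.nabla u₁ ⁅u₂, v₂⁆ =
        ⁅C₁₂.nabla u₁ u₂, v₂⁆ + ⁅u₂, C₁₂.nabla u₁ v₂⁆ +
          C₁₂.nabla (C₂₁.nabla v₂ u₁) u₂ - C₁₂.nabla (C₂₁.nabla u₂ u₁) v₂)
    (hmp₃ : ∀ (u₂ : L₂) (u₁ v₁ : L₁),
      C₂₁.nabla u₂ ⁅u₁, v₁⁆ =
        ⁅C₂₁.nabla u₂ u₁, v₁⁆ + ⁅u₁, C₂₁.nabla u₂ v₁⁆ +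
          C₂₁.nabla (C₁₂.nabla v₁ u₂) u₁ - C₂₁.nabla (C₁₂.nabla u₁ u₂) v₁)
    (br : L₁ × L₂ → L₁ × L₂ → L₁ × L₂)
    (hbr : ∀ p q : L₁ × L₂,
      br p q = (⁅p.1, q.1⁆ + C₂₁.nabla p.2 q.1 - C₂₁.nabla q.2 p.1,
                ⁅p.2, q.2⁆ + C₁₂.nabla p.1 q.2 - C₁₂.nabla q.1 p.2))
    (an : L₁ × L₂ → Derivation k R R)
    (han : ∀ p : L₁ × L₂, an p = A₁.anchor p.1 + A₂.anchor p.2) :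
    -- the bracket is alternating and additive
    (∀ p, br p p = 0) ∧
    (∀ p q r, br (p + q) r = br p r + br q r) ∧
    (∀ p q r, br p (q + r) = br p q + br p r) ∧
    -- Jacobi identity (in Leibniz form)
    (∀ p q r, br p (br q r) = br (br p q) r + br q (br p r)) ∧
    -- the anchor is a morphism of Lie algebras
    (∀ p q, an (br p q) = ⁅an p, an q⁆) ∧
    -- Leibniz rule
    (∀ (p q : L₁ × L₂) (f : R), br p (f • q) = f • br p q + an p f • q) ∧
    -- L₁ and L₂ are sub-Lie algebroids
    (∀ u₁ v₁ : L₁, br (u₁, 0) (v₁, 0) = (⁅u₁, v₁⁆, 0)) ∧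
    (∀ u₂ v₂ : L₂, br (0, u₂) (0, v₂) = (0, ⁅u₂, v₂⁆)) ∧
    (∀ u₁ : L₁, an (u₁, 0) = A₁.anchor u₁) ∧ (∀ u₂ : L₂, an (0, u₂) = A₂.anchor u₂) := by
  obtain rfl : br = twilledBracket C₁₂ C₂₁ := funext₂ hbr
  obtain rfl : an = twilledAnchor A₁ A₂ := funext han
  exact ⟨twilledBracket_self C₁₂ C₂₁, twilledBracket_add_left C₁₂ C₂₁,
    twilledBracket_add_right C₁₂ C₂₁,
    twilledBracket_leibniz_lie C₁₂ C₂₁ hflat₁₂ hflat₂₁ hmp₂ hmp₃,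
    twilledAnchor_twilledBracket C₁₂ C₂₁ hmp₁, twilledBracket_smul_right C₁₂ C₂₁,
    twilledBracket_inl_inl C₁₂ C₂₁, twilledBracket_inr_inr C₁₂ C₂₁,
    twilledAnchor_inl, twilledAnchor_inr⟩
end

section
/- Let $\mathcal{L}$ be a holomorphic Lie algebroid over $X$, $Q$ a closed holomorphic 2-$\mathcal{L}$-form, and $\mathcal{E}$ a coherent $\mathcal{O}_X$-module. A $\Lambda_{\mathcal{L},[(0,Q)]}$-module structure on $\mathcal{E}$ is equivalent to a holomorphic $\mathcal{L}$-connection $\nabla$ on $\mathcal{E}$ whose curvature satisfies $F_\nabla = Q \cdot \mathrm{id}_{\mathcal{E}}$. Concretely: given a global splitting $\zeta$ of $0 \to \mathcal{O}_X \to \Lambda_{(1)} \to \mathcal{L} \to 0$ with associated form $Q$, a map $\mu_1: \Lambda_{(1)} \otimes \mathcal{E} \to \mathcal{E}$ defined from an $\mathcal{L}$-connection $\nabla$ by $\mu_1((f + \zeta(u)) \otimes e) = fe + \nabla_u e$ extends to a $\Lambda$-module structure on $\mathcal{E}$ if and only if $F_\nabla(u,v) = Q(u,v)\,\mathrm{id}_{\mathcal{E}}$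 for all $u, v$. -/
namespace LieAlgebroid

variable {k R L : Type*} [CommRing k] [CommRing R] [Algebra k R]
  [LieRing L] [LieAlgebra k L] [Module R L] [IsScalarTower k R L]

/-- The bracket of `Λ₍₁₎ = R ⊕ L` twisted by the 2-form `Q`. -/
def twistedBracket (A : LieAlgebroid k R L) (Q : L → L → R) (p q : R × L) : R × L :=
  (Q p.2 q.2 + A.anchor p.2 q.1 - A.anchor q.2 p.1, ⁅p.2, q.2⁆)

namespace Connection

variable {A : LieAlgebroid k R L} {E : Type*} [AddCommGroup E] [Module R E]

def act (C : A.Connection E) (p : R × L) (e : E) : E :=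
  p.1 • e + C.nabla p.2 e

theorem act_commutator_sub_act_twistedBracket (C : A.Connection E) (Q : L → L → R)
    (p q : R × L) (e : E) :
    C.act p (C.act q e) - C.act q (C.act p e) - C.act (A.twistedBracket Q p q) e =
      C.curv p.2 q.2 e - Q p.2 q.2 • e := by
  obtain ⟨f, u⟩ := p
  obtain ⟨g, v⟩ := q
  simp only [act, twistedBracket, curv, C.add_right, C.leibniz]
  module

theorem act_commutator_eq_iff_curv_eq (C : A.Connection E) (Q : L → L → R) :
    (∀ (p q : R × L) (e : E),
        C.act p (C.act q e) - C.act q (C.act p e) = C.act (A.twistedBracket Q p q) e) ↔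
      ∀ (u v : L) (e : E), C.curv u v e = Q u v • e := by
  simp only [← sub_eq_zero (b := C.act (A.twistedBracket Q _ _) _),
    act_commutator_sub_act_twistedBracket, sub_eq_zero]
  exact ⟨fun h u v => h (0, u) (0, v), fun h p q => h p.2 q.2⟩

end Connection

end LieAlgebroid

theorem lambda_module_iff_curvature_eq_Q_general {R L E : Type*} [CommRing R] [Algebra ℂ R]
    [LieRing L] [LieAlgebra ℂ L] [Module R L] [IsScalarTower ℂ R L]
    [AddCommGroup E] [Module R E]
    (A : LieAlgebroid ℂ R L)
    (Q : L → L → R)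
    (C : A.Connection E)
    -- the degree-one piece Λ₍₁₎ = O_X ⊕ L with the Q-twisted bracket
    (br : R × L → R × L → R × L)
    (hbr : ∀ p q : R × L,
      br p q = (Q p.2 q.2 + A.anchor p.2 q.1 - A.anchor q.2 p.1, ⁅p.2, q.2⁆))
    -- μ₁((f + ζ u) ⊗ e) = f e + ∇_u e
    (μ₁ : R × L → E → E) (hμ₁ : ∀ (p : R × L) (e : E), μ₁ p e = p.1 • e + C.nabla p.2 e) :
    (∀ (a b : R × L) (e : E), μ₁ a (μ₁ b e) - μ₁ b (μ₁ a e) = μ₁ (br a b) e) ↔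
      (∀ (u v : L) (e : E), C.curv u v e = Q u v • e) := by
  obtain rfl : br = A.twistedBracket Q := funext₂ hbr
  obtain rfl : μ₁ = C.act := funext₂ hμ₁
  exact C.act_commutator_eq_iff_curv_eq Q

/-- Let `L` be a holomorphic Lie algebroid, `Q` a closed 2-`L`-form and
`E` a sheaf.  A `Λ_{L,[(0,Q)]}`-module structure on `E` is equivalent to a holomorphic
`L`-connection `∇` with `F_∇ = Q·id_E`: given the splitting `ζ` of
`0 → O_X → Λ₍₁₎ → L → 0` (so `Λ₍₁₎ = O_X ⊕ L` with bracket
`[f+u, g+v] = [u,v] + Q(u,v) + a(u)g - a(v)f`), the map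
`μ₁((f + ζu) ⊗ e) = f e + ∇_u e` extends to a `Λ`-module structure, i.e. satisfies
`μ₁(a ⊗ μ₁(b ⊗ e)) - μ₁(b ⊗ μ₁(a ⊗ e)) = μ₁([a,b] ⊗ e)` for all `a, b ∈ Λ₍₁₎`,
if and only if `F_∇(u,v) = Q(u,v)·id_E` for all `u, v`. -/
theorem lambda_module_iff_curvature_eq_Q {R L E : Type*} [CommRing R] [Algebra ℂ R]
    [LieRing L] [LieAlgebra ℂ L] [Module R L] [IsScalarTower ℂ R L]
    [AddCommGroup E] [Module R E]
    (A : LieAlgebroid ℂ R L)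
    (Q : L → L → R)
    (Qskew : ∀ u v, Q u v = -Q v u)
    (Qadd : ∀ u v w, Q (u + v) w = Q u w + Q v w)
    (Qsmul : ∀ (f : R) u v, Q (f • u) v = f * Q u v)
    (Qclosed : ∀ u v w : L,
      A.anchor u (Q v w) - A.anchor v (Q u w) + A.anchor w (Q u v)
        - Q ⁅u, v⁆ w + Q ⁅u, w⁆ v - Q ⁅v, w⁆ u = 0)
    (C : A.Connection E)
    -- the degree-one piece Λ₍₁₎ = O_X ⊕ L with the Q-twisted bracket
    (br : R × L → R × L → R × L)
    (hbr : ∀ p q : R × L,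
      br p q = (Q p.2 q.2 + A.anchor p.2 q.1 - A.anchor q.2 p.1, ⁅p.2, q.2⁆))
    -- μ₁((f + ζ u) ⊗ e) = f e + ∇_u e
    (μ₁ : R × L → E → E) (hμ₁ : ∀ (p : R × L) (e : E), μ₁ p e = p.1 • e + C.nabla p.2 e) :
    (∀ (a b : R × L) (e : E), μ₁ a (μ₁ b e) - μ₁ b (μ₁ a e) = μ₁ (br a b) e) ↔
      (∀ (u v : L) (e : E), C.curv u v e = Q u v • e) :=
  lambda_module_iff_curvature_eq_Q_general A Q C br hbr μ₁ hμ₁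
end
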